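/- arXiv:0710.2098 — 2 statements merged into one kernel-verified Lean document; each statement's English description precedes it below -/
import Mathlib

section
/- Let G1 and G2 be projective geometries, D ⊆ G1, and g : D → G2 a map such that for every subspace T of G2 the set (G1 \ D) ∪ g⁻¹(T) is a subspace of G1 (a morphism of projective geometries with kernel G1 \ D). If G1 is irreducible, then the image of g lies in a single maximal irreducible subspace of G2: for all a, b ∈ D, either g(a) = g(b) or there exists c with c ≠ g(a), c ≠ g(b) and l₂(c, g(a), g(b)). -/
structure ProjGeom (G : Type*) where
  l : G → G → G → Prop
  g1 : ∀ a b, l a b a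
  g2 : ∀ a b p q, l a p q → l b p q → p ≠ q → l a b p
  g3 : ∀ a b c d p, l p a b → l p c d → ∃ q, l q a c ∧ l q b d

namespace ProjGeom

variable {G : Type*} (PG : ProjGeom G)

open scoped Classical in
/-- The projective line through `a` and `b`, with the convention `a ⋆ a = {a}`. -/
noncomputable def star (a b : G) : Set G :=
  if a = b then {a} else {x | PG.l x a b}

/-- A subspace of a projective geometry. -/
def IsSubspace (S : Set G) : Prop :=
  ∀ a ∈ S, ∀ b ∈ S, PG.star a b ⊆ S

/-- The projective closure of a subset. -/
def cl (A : Set G) : Set G :=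
  ⋂₀ {S : Set G | PG.IsSubspace S ∧ A ⊆ S}

end ProjGeom

lemma ProjGeom.lsym {G : Type*} (PG : ProjGeom G) {x y z : G} (h : PG.l x y z) :
    PG.l x z y := by
  by_cases hyz : y = z
  · subst hyz; exact h
  · exact PG.g2 x z y z h (PG.g1 z y) hyz

lemma ProjGeom.lthird {G : Type*} (PG : ProjGeom G) {a b c : G} (h : PG.l c a b)
    (hab : a ≠ b) (hcb : c ≠ b) : PG.l b a c := by
  have h1 : PG.l c b a := PG.lsym h
  have h2 : PG.l a c b := PG.g2 a c b a (PG.g1 a b) h1 (Ne.symm hab)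
  exact PG.g2 b a c b (PG.g1 b c) h2 hcb

lemma ProjGeom.singleton_subspace {G : Type*} (PG : ProjGeom G) (p : G) :
    PG.IsSubspace {p} := by
  intro x hx y hy z hz
  rw [Set.mem_singleton_iff] at hx hy
  subst hx; subst hy
  simpa [ProjGeom.star] using hz

/-- A morphism of projective geometries (a partial map, defined on `D`, such that inverse
images of subspaces, together with the kernel, are subspaces) with irreducible domain has
its image inside a single maximal irreducible subspace of the codomain: any two image
points are equal or joined by a line with at least three points. -/
theorem morphism_image_in_irreducible_component {G1 G2 : Type*}
    (P1 : ProjGeom G1) (P2 : ProjGeom G2) (D : Set G1) (g : G1 → G2)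
    (hmor : ∀ T : Set G2, P2.IsSubspace T →
      P1.IsSubspace (Dᶜ ∪ {x ∈ D | g x ∈ T}))
    (hirr : ∀ a b : G1, a ≠ b → ∃ c, c ≠ a ∧ c ≠ b ∧ P1.l c a b) :
    ∀ a ∈ D, ∀ b ∈ D,
      g a = g b ∨ ∃ c, c ≠ g a ∧ c ≠ g b ∧ P2.l c (g a) (g b) := by
  intro a ha b hb
  by_cases hgab : g a = g b
  · exact Or.inl hgab
  right
  by_contra hno
  push_neg at hno
  have hline : ∀ x, P2.l x (g a) (g b) → x = g a ∨ x = g b := by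
    intro x hx
    by_contra h
    push_neg at h
    exact hno x h.1 h.2 hx
  have hpair : P2.IsSubspace {g a, g b} := by
    intro x hx y hy z hz
    rcases hx with hx | hx <;> rcases hy with hy | hy <;> subst hx <;> subst hy
    · simp only [ProjGeom.star, if_pos rfl, Set.mem_singleton_iff] at hz
      exact Or.inl hz
    · simp only [ProjGeom.star, if_neg hgab, Set.mem_setOf_eq] at hz
      exact hline z hz
    · simp only [ProjGeom.star, if_neg (Ne.symm hgab), Set.mem_setOf_eq] at hz
      exact hline z (P2.lsym hz)
    · simp only [ProjGeom.star, if_pos rfl, Set.mem_singleton_iff] at hz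
      exact Or.inr hz
  have hSa := hmor {g a} (P2.singleton_subspace (g a))
  have hSb := hmor {g b} (P2.singleton_subspace (g b))
  have hS := hmor {g a, g b} hpair
  have hab' : a ≠ b := fun h => hgab (by rw [h])
  obtain ⟨c, hca, hcb, hc⟩ := hirr a b hab'
  have haS : a ∈ Dᶜ ∪ {x ∈ D | g x ∈ ({g a, g b} : Set G2)} :=
    Or.inr ⟨ha, Or.inl rfl⟩
  have hbS : b ∈ Dᶜ ∪ {x ∈ D | g x ∈ ({g a, g b} : Set G2)} :=
    Or.inr ⟨hb, Or.inr rfl⟩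
  have hcstar : c ∈ P1.star a b := by
    simp only [ProjGeom.star, if_neg hab', Set.mem_setOf_eq]
    exact hc
  have hcS := hS a haS b hbS hcstar
  have hcase : (c ∈ Dᶜ ∪ {x ∈ D | g x ∈ ({g a} : Set G2)}) ∨
      (c ∈ Dᶜ ∪ {x ∈ D | g x ∈ ({g b} : Set G2)}) := by
    rcases hcS with h | ⟨hcD, h⟩
    · exact Or.inl (Or.inl h)
    · rcases h with h | h
      · exact Or.inl (Or.inr ⟨hcD, h⟩)
      · exact Or.inr (Or.inr ⟨hcD, h⟩)
  rcases hcase with hcSa | hcSb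
  · have haSa : a ∈ Dᶜ ∪ {x ∈ D | g x ∈ ({g a} : Set G2)} := Or.inr ⟨ha, rfl⟩
    have hbstar : b ∈ P1.star a c := by
      simp only [ProjGeom.star, if_neg (Ne.symm hca), Set.mem_setOf_eq]
      exact P1.lthird hc hab' hcb
    have := hSa a haSa c hcSa hbstar
    rcases this with h | ⟨_, h⟩
    · exact h hb
    · exact hgab (Set.mem_singleton_iff.mp h).symm
  · have hbSb : b ∈ Dᶜ ∪ {x ∈ D | g x ∈ ({g b} : Set G2)} := Or.inr ⟨hb, rfl⟩
    have hastar : a ∈ P1.star b c := by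
      simp only [ProjGeom.star, if_neg (Ne.symm hcb), Set.mem_setOf_eq]
      exact P1.lthird (P1.lsym hc) (Ne.symm hab') hca
    have := hSb b hbSb c hcSb hastar
    rcases this with h | ⟨_, h⟩
    · exact h ha
    · exact hgab (Set.mem_singleton_iff.mp h)
end

section
/- Every irreducible projective geometry of dimension at least 3 is arguesian: if G is an irreducible projective geometry such that for all a,b,c ∈ G there exists d ∈ G with d ∉ cl({a,b,c}), then G satisfies Desargues' property. -/
/-- Irreducibility: every line has at least three points. -/
def ProjGeom.Irreducible {G : Type*} (PG : ProjGeom G) : Prop :=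
  ∀ a b : G, a ≠ b → ∃ c, c ≠ a ∧ c ≠ b ∧ PG.l c a b

/-- Dimension at least 2: for all `a, b` there is a point not on the line through them. -/
def ProjGeom.DimAtLeastTwo {G : Type*} (PG : ProjGeom G) : Prop :=
  ∀ a b : G, ∃ c, ¬ PG.l c a b

/-- No three of the four given points are collinear. -/
def ProjGeom.NoThreeCollinear {G : Type*} (PG : ProjGeom G) (p q r s : G) : Prop :=
  ∀ x y z : G, x ≠ y → x ≠ z → y ≠ z →
    x ∈ ({p, q, r, s} : Set G) → y ∈ ({p, q, r, s} : Set G) → z ∈ ({p, q, r, s} : Set G) →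
    ¬ PG.l x y z

/-- Desargues' property. -/
def ProjGeom.Desargues {G : Type*} (PG : ProjGeom G) : Prop :=
  ∀ a1 a2 a3 b1 b2 b3 c : G,
    (PG.l c a1 b1 ∧ c ≠ a1 ∧ a1 ≠ b1 ∧ b1 ≠ c) →
    (PG.l c a2 b2 ∧ c ≠ a2 ∧ a2 ≠ b2 ∧ b2 ≠ c) →
    (PG.l c a3 b3 ∧ c ≠ a3 ∧ a3 ≠ b3 ∧ b3 ≠ c) →
    PG.NoThreeCollinear c a1 a2 a3 → PG.NoThreeCollinear c b1 b2 b3 →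
    ∀ p12 p13 p23 : G,
      p12 ∈ PG.star a1 a2 ∩ PG.star b1 b2 →
      p13 ∈ PG.star a1 a3 ∩ PG.star b1 b3 →
      p23 ∈ PG.star a2 a3 ∩ PG.star b2 b3 →
      PG.l p12 p13 p23

/-- An arguesian projective geometry: irreducible, of dimension at least 2, satisfying
Desargues' property. -/
def ProjGeom.Arguesian {G : Type*} (PG : ProjGeom G) : Prop :=
  PG.Irreducible ∧ PG.DimAtLeastTwo ∧ PG.Desargues



namespace ProjGeom

variable {G : Type*} {PG : ProjGeom G}

lemma sym {x a b : G} (h : PG.l x a b) : PG.l x b a := by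
  by_cases hab : a = b
  · subst hab; exact h
  · exact PG.g2 x b a b h (PG.g1 b a) hab

lemma rot {x a b : G} (h : PG.l x a b) : PG.l a x b := by
  by_cases hab : a = b
  · subst hab; exact PG.g1 a x
  · exact PG.g2 a x b a (PG.g1 a b) (sym h) (Ne.symm hab)

/-- All permutations: from `l x a b` obtain `l a b x`. -/
lemma rot' {x a b : G} (h : PG.l x a b) : PG.l a b x := sym (rot h)

lemma mem_star_iff {x a b : G} (hab : a ≠ b) : x ∈ PG.star a b ↔ PG.l x a b := by
  simp [star, hab, Set.mem_setOf_eq]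

lemma left_mem_star (a b : G) : a ∈ PG.star a b := by
  by_cases hab : a = b
  · subst hab; simp [star]
  · exact (mem_star_iff hab).2 (sym (PG.g1 a b))

lemma right_mem_star (a b : G) : b ∈ PG.star a b := by
  by_cases hab : a = b
  · subst hab; simp [star]
  · exact (mem_star_iff hab).2 (PG.g1 b a)

lemma star_comm (a b : G) : PG.star a b = PG.star b a := by
  by_cases hab : a = b
  · subst hab; rfl
  · ext x
    rw [mem_star_iff hab, mem_star_iff (Ne.symm hab)]
    exact ⟨fun h => sym h, fun h => sym h⟩

lemma star_eq_of_mem {a b p : G} (hab : a ≠ b) (hp : PG.l p a b) (hpa : p ≠ a) :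
    PG.star p a = PG.star a b := by
  ext x
  rw [mem_star_iff hpa, mem_star_iff hab]
  constructor
  · intro hx
    have hb : PG.l b p a := PG.g2 b p a b (PG.g1 b a) hp hab
    by_cases hbp : b = p
    · subst hbp; exact sym hx
    · have h1 : PG.l x b p := PG.g2 x b p a hx hb hpa
      have h2 : PG.l a b p := rot' hp
      exact PG.g2 x a b p h1 h2 hbp
  · intro hx
    exact PG.g2 x p a b hx hp hab

lemma star_eq {a b p q : G} (hab : a ≠ b) (hp : p ∈ PG.star a b) (hq : q ∈ PG.star a b)
    (hpq : p ≠ q) : PG.star p q = PG.star a b := by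
  rw [mem_star_iff hab] at hp hq
  by_cases hpa : p = a
  · subst hpa
    have hqp : q ≠ p := Ne.symm hpq
    rw [star_comm]
    exact star_eq_of_mem hab hq hqp
  · have h1 : PG.star p a = PG.star a b := star_eq_of_mem hab hp hpa
    have hq' : q ∈ PG.star p a := by rw [h1]; exact (mem_star_iff hab).2 hq
    have h2 : PG.star q p = PG.star p a :=
      star_eq_of_mem hpa ((mem_star_iff hpa).1 hq') hpq.symm
    rw [star_comm, h2, h1]

lemma isSubspace_cl (A : Set G) : PG.IsSubspace (PG.cl A) := by
  intro a ha b hb x hx S hS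
  exact hS.1 a (ha S hS) b (hb S hS) hx

lemma subset_cl (A : Set G) : A ⊆ PG.cl A := by
  intro a ha S hS
  exact hS.2 ha

/-- A line with a point outside a subspace meets the subspace in at most one point. -/
lemma unique_in_subspace {S : Set G} (hS : PG.IsSubspace S) {a b w x y : G} (hab : a ≠ b)
    (hw : w ∈ PG.star a b) (hwS : w ∉ S)
    (hx : x ∈ PG.star a b) (hxS : x ∈ S) (hy : y ∈ PG.star a b) (hyS : y ∈ S) : x = y := by
  by_contra hxy
  have h := star_eq hab hx hy hxy
  exact hwS (hS x hxS y hyS (by rw [h]; exact hw))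

/-- Two distinct lines meet in at most one point. -/
lemma eq_of_mem_two_lines {a b u v x y : G} (hab : a ≠ b) (huv : u ≠ v)
    (hne : PG.star a b ≠ PG.star u v)
    (hx1 : x ∈ PG.star a b) (hx2 : x ∈ PG.star u v)
    (hy1 : y ∈ PG.star a b) (hy2 : y ∈ PG.star u v) : x = y := by
  by_contra hxy
  exact hne ((star_eq hab hx1 hy1 hxy).symm.trans (star_eq huv hx2 hy2 hxy))

lemma rot2 {x a b : G} (h : PG.l x a b) : PG.l b x a := rot (sym h)

lemma rot2' {x a b : G} (h : PG.l x a b) : PG.l b a x := sym (rot2 h)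

/-- The key spatial Desargues step: if `b2, b3` lie outside a subspace `S`,
the three intersection points (which lie in `S`) are collinear. -/
lemma key {S : Set G} (hS : PG.IsSubspace S) {b1 b2 b3 p12 p13 p23 : G}
    (h23 : b2 ≠ b3) (hb2 : b2 ∉ S)
    (hp12S : p12 ∈ S) (hp13S : p13 ∈ S) (hp23S : p23 ∈ S)
    (hpp : p12 ≠ p13)
    (hl12 : PG.l p12 b1 b2) (hl13 : PG.l p13 b1 b3) (hl23 : PG.l p23 b2 b3) :
    PG.l p12 p13 p23 := by
  obtain ⟨q, hq1, hq2⟩ := PG.g3 p12 b2 p13 b3 b1 (rot hl12) (rot hl13)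
  have hqS : q ∈ S := hS p12 hp12S p13 hp13S ((mem_star_iff hpp).2 hq1)
  have hq23 : q ∈ PG.star b2 b3 := (mem_star_iff h23).2 hq2
  have hqp : q = p23 :=
    unique_in_subspace hS h23 (left_mem_star b2 b3) hb2 hq23 hqS
      ((mem_star_iff h23).2 hl23) hp23S
  rw [hqp] at hq1
  exact sym (rot hq1)

end ProjGeom
open ProjGeom

/-- Every irreducible projective geometry of dimension at least 3 satisfies Desargues'
property (hence is arguesian). -/
theorem desargues_of_dim_ge_three {G : Type*} (PG : ProjGeom G)
    (hirr : PG.Irreducible)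
    (hdim3 : ∀ a b c : G, ∃ d : G, d ∉ PG.cl {a, b, c}) :
    PG.Desargues := by
  intro a1 a2 a3 b1 b2 b3 c h1 h2 h3 hA hB p12 p13 p23 hp12 hp13 hp23
  obtain ⟨hl1, hca1, hab1, hb1c⟩ := h1
  obtain ⟨hl2, hca2, hab2, hb2c⟩ := h2
  obtain ⟨hl3, hca3, hab3, hb3c⟩ := h3
  have hcb1 : c ≠ b1 := Ne.symm hb1c
  have hcb2 : c ≠ b2 := Ne.symm hb2c
  have hcb3 : c ≠ b3 := Ne.symm hb3c
  -- auxiliary: distinctness of the triangle vertices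
  have keyne : ∀ x y u v p : G, PG.l c x u → PG.l c y v → c ≠ x → x ≠ u →
      (u ≠ v → ¬ PG.l c u v) → p ∈ PG.star x y → p ∈ PG.star u v → x ≠ y := by
    intro x y u v p hx hy hcx hxu hnc hp1 hp2 hxy
    subst hxy
    by_cases huv : u = v
    · subst huv
      have e1 : p = x := by simpa [ProjGeom.star] using hp1
      have e2 : p = u := by simpa [ProjGeom.star] using hp2
      exact hxu (e1 ▸ e2)
    · have hu : u ∈ PG.star c x := (mem_star_iff hcx).2 (sym (rot2' hx))
      have hv : v ∈ PG.star c x := (mem_star_iff hcx).2 (sym (rot2' hy))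
      have hE : PG.star u v = PG.star c x := star_eq hcx hu hv huv
      exact hnc huv ((mem_star_iff huv).1 (by rw [hE]; exact left_mem_star c x))
  have ha12 : a1 ≠ a2 := keyne a1 a2 b1 b2 p12 hl1 hl2 hca1 hab1
    (fun huv => hB c b1 b2 hcb1 hcb2 huv (by simp) (by simp) (by simp)) hp12.1 hp12.2
  have ha13 : a1 ≠ a3 := keyne a1 a3 b1 b3 p13 hl1 hl3 hca1 hab1
    (fun huv => hB c b1 b3 hcb1 hcb3 huv (by simp) (by simp) (by simp)) hp13.1 hp13.2
  have ha23 : a2 ≠ a3 := keyne a2 a3 b2 b3 p23 hl2 hl3 hca2 hab2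
    (fun huv => hB c b2 b3 hcb2 hcb3 huv (by simp) (by simp) (by simp)) hp23.1 hp23.2
  have hb12 : b1 ≠ b2 := keyne b1 b2 a1 a2 p12 (sym hl1) (sym hl2) hcb1 (Ne.symm hab1)
    (fun huv => hA c a1 a2 hca1 hca2 huv (by simp) (by simp) (by simp)) hp12.2 hp12.1
  have hb13 : b1 ≠ b3 := keyne b1 b3 a1 a3 p13 (sym hl1) (sym hl3) hcb1 (Ne.symm hab1)
    (fun huv => hA c a1 a3 hca1 hca3 huv (by simp) (by simp) (by simp)) hp13.2 hp13.1
  have hb23 : b2 ≠ b3 := keyne b2 b3 a2 a3 p23 (sym hl2) (sym hl3) hcb2 (Ne.symm hab2)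
    (fun huv => hA c a2 a3 hca2 hca3 huv (by simp) (by simp) (by simp)) hp23.2 hp23.1
  -- non-collinearity facts
  have nca12 : ¬ PG.l c a1 a2 := hA c a1 a2 hca1 hca2 ha12 (by simp) (by simp) (by simp)
  have nca13 : ¬ PG.l c a1 a3 := hA c a1 a3 hca1 hca3 ha13 (by simp) (by simp) (by simp)
  have nca23 : ¬ PG.l c a2 a3 := hA c a2 a3 hca2 hca3 ha23 (by simp) (by simp) (by simp)
  have na312 : ¬ PG.l a3 a1 a2 :=
    hA a3 a1 a2 (Ne.symm ha13) (Ne.symm ha23) ha12 (by simp) (by simp) (by simp)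
  have nb312 : ¬ PG.l b3 b1 b2 :=
    hB b3 b1 b2 (Ne.symm hb13) (Ne.symm hb23) hb12 (by simp) (by simp) (by simp)
  -- the plane of the first triangle
  set π := PG.cl {a1, a2, a3} with hπdef
  have hπ : PG.IsSubspace π := isSubspace_cl _
  have ha1π : a1 ∈ π := subset_cl _ (by simp)
  have ha2π : a2 ∈ π := subset_cl _ (by simp)
  have ha3π : a3 ∈ π := subset_cl _ (by simp)
  have hp12π : p12 ∈ π := hπ a1 ha1π a2 ha2π hp12.1
  have hp13π : p13 ∈ π := hπ a1 ha1π a3 ha3π hp13.1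
  have hp23π : p23 ∈ π := hπ a2 ha2π a3 ha3π hp23.1
  -- p12 ≠ p13
  have linesa : PG.star a1 a2 ≠ PG.star a1 a3 := by
    intro hE
    exact na312 ((mem_star_iff ha12).1 (by rw [hE]; exact right_mem_star a1 a3))
  have linesb : PG.star b1 b2 ≠ PG.star b1 b3 := by
    intro hE
    exact nb312 ((mem_star_iff hb12).1 (by rw [hE]; exact right_mem_star b1 b3))
  have hpp1213 : p12 ≠ p13 := by
    intro hE
    have hx : p12 = a1 := eq_of_mem_two_lines ha12 ha13 linesa hp12.1
      (by rw [hE]; exact hp13.1) (left_mem_star a1 a2) (left_mem_star a1 a3)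
    have hy : p12 = b1 := eq_of_mem_two_lines hb12 hb13 linesb hp12.2
      (by rw [hE]; exact hp13.2) (left_mem_star b1 b2) (left_mem_star b1 b3)
    exact hab1 (hx.symm.trans hy)
  by_cases hb1π : b1 ∈ π
  · -- coplanar case: lift the second triangle out of the plane
    have hcπ : c ∈ π := hπ a1 ha1π b1 hb1π ((mem_star_iff hab1).2 hl1)
    have hb2π : b2 ∈ π := hπ c hcπ a2 ha2π ((mem_star_iff hca2).2 (rot2 hl2))
    have hb3π : b3 ∈ π := hπ c hcπ a3 ha3π ((mem_star_iff hca3).2 (rot2 hl3))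
    obtain ⟨d, hdπ⟩ := hdim3 a1 a2 a3
    rw [← hπdef] at hdπ
    have hcd : c ≠ d := fun h => hdπ (h ▸ hcπ)
    obtain ⟨e, hec, hed, hle⟩ := hirr c d hcd
    have hdce : PG.l d c e := sym (rot2 hle)
    have heπ : e ∉ π := fun h => hdπ (hπ c hcπ e h ((mem_star_iff (Ne.symm hec)).2 hdce))
    have hlcde : PG.l c d e := sym (rot hle)
    have hstarde : PG.star d e = PG.star c d :=
      star_eq hcd (right_mem_star c d) ((mem_star_iff hcd).2 hle) (Ne.symm hed)
    have lineCD : ∀ x, x ∈ PG.star c d → x ∈ π → x = c := fun x hx hxπ =>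
      unique_in_subspace hπ hcd (right_mem_star c d) hdπ hx hxπ (left_mem_star c d) hcπ
    obtain ⟨m1, hm1a, hm1b⟩ := PG.g3 a1 b1 d e c hl1 hlcde
    obtain ⟨m2, hm2a, hm2b⟩ := PG.g3 a2 b2 d e c hl2 hlcde
    obtain ⟨m3, hm3a, hm3b⟩ := PG.g3 a3 b3 d e c hl3 hlcde
    have mprop : ∀ a b m : G, a ∈ π → b ∈ π → a ≠ b → b ≠ c →
        PG.l m a d → PG.l m b e → (m ∉ π ∧ m ≠ d) := by
      intro a b m haπ hbπ hab hbc hma hmb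
      have hma' : m ≠ a := by
        intro h
        subst h
        exact heπ (hπ m haπ b hbπ ((mem_star_iff hab).2 (rot (sym hmb))))
      have hmπ : m ∉ π := fun hmem =>
        hdπ (hπ a haπ m hmem ((mem_star_iff (Ne.symm hma')).2 (sym (rot2 hma))))
      have hmd : m ≠ d := by
        intro h
        subst h
        have hb' : b ∈ PG.star m e := (mem_star_iff (Ne.symm hed)).2 (rot hmb)
        rw [hstarde] at hb'
        exact hbc (lineCD b hb' hbπ)
      exact ⟨hmπ, hmd⟩
    obtain ⟨hm1π, hm1d⟩ := mprop a1 b1 m1 ha1π hb1π hab1 hb1c hm1a hm1b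
    obtain ⟨hm2π, hm2d⟩ := mprop a2 b2 m2 ha2π hb2π hab2 hb2c hm2a hm2b
    obtain ⟨hm3π, hm3d⟩ := mprop a3 b3 m3 ha3π hb3π hab3 hb3c hm3a hm3b
    have mdist : ∀ x y mx my : G, x ∈ π → y ∈ π → x ≠ y →
        PG.l mx x d → PG.l my y d → mx ≠ d → mx ≠ my := by
      intro x y mx my hxπ hyπ hxy hmx hmy hmxd hE
      subst hE
      have hxd : x ≠ d := fun h => hdπ (h ▸ hxπ)
      have hyd : y ≠ d := fun h => hdπ (h ▸ hyπ)
      have hlines : PG.star x d ≠ PG.star y d := by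
        intro hE2
        have hy' : PG.l y x d := (mem_star_iff hxd).1 (by rw [hE2]; exact left_mem_star y d)
        exact hdπ (hπ x hxπ y hyπ ((mem_star_iff hxy).2 (sym (rot2 hy'))))
      exact hmxd (eq_of_mem_two_lines hxd hyd hlines ((mem_star_iff hxd).2 hmx)
        ((mem_star_iff hyd).2 hmy) (right_mem_star x d) (right_mem_star y d))
    have hm12 : m1 ≠ m2 := mdist a1 a2 m1 m2 ha1π ha2π ha12 hm1a hm2a hm1d
    have hm13 : m1 ≠ m3 := mdist a1 a3 m1 m3 ha1π ha3π ha13 hm1a hm3a hm1d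
    have hm23 : m2 ≠ m3 := mdist a2 a3 m2 m3 ha2π ha3π ha23 hm2a hm3a hm2d
    -- identify p_ij as the meeting point of the lifted lines
    have ident : ∀ x y u v mx my px : G, x ∈ π → y ∈ π → u ∈ π → v ∈ π →
        x ≠ y → u ≠ v → mx ≠ my → mx ∉ π → x ≠ u → PG.l c x u → ¬ PG.l c x y →
        PG.l mx x d → PG.l my y d → PG.l mx u e → PG.l my v e →
        px ∈ PG.star x y → px ∈ PG.star u v → PG.l px mx my := by
      intro x y u v mx my px hxπ hyπ huπ hvπ hxy huv hmm hmxπ hxu hlxu hnc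
        hmx hmy hmxu hmyv hpx hpu
      obtain ⟨q, hq1, hq2⟩ := PG.g3 x mx y my d (sym (rot2 hmx)) (sym (rot2 hmy))
      obtain ⟨r, hr1, hr2⟩ := PG.g3 u mx v my e (sym (rot2 hmxu)) (sym (rot2 hmyv))
      have hqπ : q ∈ π := hπ x hxπ y hyπ ((mem_star_iff hxy).2 hq1)
      have hrπ : r ∈ π := hπ u huπ v hvπ ((mem_star_iff huv).2 hr1)
      have hqr : q = r := unique_in_subspace hπ hmm (left_mem_star mx my) hmxπ
        ((mem_star_iff hmm).2 hq2) hqπ ((mem_star_iff hmm).2 hr2) hrπ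
      have hlines : PG.star x y ≠ PG.star u v := by
        intro hE
        have hu' : u ∈ PG.star x y := by rw [hE]; exact left_mem_star u v
        have hE2 : PG.star x u = PG.star x y := star_eq hxy (left_mem_star x y) hu' hxu
        exact hnc ((mem_star_iff hxy).1 (by rw [← hE2]; exact (mem_star_iff hxu).2 hlxu))
      have hqp : q = px := eq_of_mem_two_lines hxy huv hlines
        ((mem_star_iff hxy).2 hq1) (by rw [hqr]; exact (mem_star_iff huv).2 hr1) hpx hpu
      rw [← hqp]
      exact hq2
    have hq12 : PG.l p12 m1 m2 := ident a1 a2 b1 b2 m1 m2 p12 ha1π ha2π hb1π hb2π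
      ha12 hb12 hm12 hm1π hab1 hl1 nca12 hm1a hm2a hm1b hm2b hp12.1 hp12.2
    have hq13 : PG.l p13 m1 m3 := ident a1 a3 b1 b3 m1 m3 p13 ha1π ha3π hb1π hb3π
      ha13 hb13 hm13 hm1π hab1 hl1 nca13 hm1a hm3a hm1b hm3b hp13.1 hp13.2
    have hq23 : PG.l p23 m2 m3 := ident a2 a3 b2 b3 m2 m3 p23 ha2π ha3π hb2π hb3π
      ha23 hb23 hm23 hm2π hab2 hl2 nca23 hm2a hm3a hm2b hm3b hp23.1 hp23.2
    exact key hπ hm23 hm2π hp12π hp13π hp23π hpp1213 hq12 hq13 hq23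
  · -- non-coplanar case: apply the key lemma directly
    have hb2π : b2 ∉ π := fun h => hb1π (hπ c (hπ a2 ha2π b2 h ((mem_star_iff hab2).2 hl2))
      a1 ha1π ((mem_star_iff hca1).2 (rot2 hl1)))
    have hb3π : b3 ∉ π := fun h => hb1π (hπ c (hπ a3 ha3π b3 h ((mem_star_iff hab3).2 hl3))
      a1 ha1π ((mem_star_iff hca1).2 (rot2 hl1)))
    exact key hπ hb23 hb2π hp12π hp13π hp23π hpp1213 ((mem_star_iff hb12).1 hp12.2)
      ((mem_star_iff hb13).1 hp13.2) ((mem_star_iff hb23).1 hp23.2)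
end
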